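/- (Veech's short-curve bound, abstract form) Suppose X is a point on the axis of a pseudo-Anosov mapping class γ of translation length at most R acting on Teichmüller space with the Teichmüller metric, and suppose α is a simple closed curve with Ext_X(α) ≤ ε₀''·e^{−(6g−4)R}. Using Kerckhoff's inequality Ext_{γ^j α}(X) ≤ e^{2jR}·Ext_α(X), the curves α, γα, …, γ^{3g−2}α all have extremal length at most ε₀'' on X; if ε₀'' is small enough that curves of extremal length ≤ ε₀'' are pairwise disjoint, this yields 3g−2 disjoint simple closed curves on a genus g surface, a contradiction since at most 3g−3 disjoint curves exist. Hence every point X on a closed geodesic of length at most R in moduli space of genus g satisfies ℓ₁(X) ≥ ε₀'·e^{−(6g−6)R} for a constant ε₀' depending only on g. -/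

import Mathlib

open Real

theorem mul_exp_le_of_le_mul_exp_neg {x ε t c R : ℝ} (hε : 0 ≤ ε) (hR : 0 ≤ R) (htc : t ≤ c)
    (hx : x ≤ ε * exp (-c * R)) : exp (t * R) * x ≤ ε :=
  calc exp (t * R) * x ≤ exp (t * R) * (ε * exp (-c * R)) := by gcongr
    _ = ε * exp ((t - c) * R) := by rw [mul_left_comm, ← exp_add]; ring_nf
    _ ≤ ε * 1 := by
        gcongr
        exact exp_le_one_iff.mpr (mul_nonpos_of_nonpos_of_nonneg (by linarith) hR)
    _ = ε := mul_one ε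

theorem stmt6_general (g : ℕ) (R : ℝ) (hR : 0 < R)
    (ε : ℝ) (hε : 0 < ε)
    (Curve : Type*) (Ext : Curve → ℝ) (T : Curve → Curve)
    (disj : Curve → Curve → Prop)
    (hKer : ∀ (α : Curve) (j : ℕ), Ext (T^[j] α) ≤ Real.exp (2 * j * R) * Ext α)
    (hshortdisj : ∀ α β : Curve, Ext α ≤ ε → Ext β ≤ ε → α ≠ β → disj α β)
    (α : Curve)
    (hdistinct : ∀ i j : ℕ, i ≤ 3 * g - 2 → j ≤ 3 * g - 2 → i ≠ j → T^[i] α ≠ T^[j] α)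
    (hmax : ¬ ∃ f : Fin (3 * g - 2) → Curve,
      Function.Injective f ∧ ∀ i j : Fin (3 * g - 2), i ≠ j → disj (f i) (f j))
    (hα : Ext α ≤ ε * Real.exp (-((6 * g : ℝ) - 4) * R)) :
    False := by
  have hshort (i : Fin (3 * g - 2)) : Ext (T^[i] α) ≤ ε := by
    have hi : ((2 * (i : ℕ) + 4 : ℕ) : ℝ) ≤ (6 * g : ℕ) := by
      exact_mod_cast (by omega : 2 * (i : ℕ) + 4 ≤ 6 * g)
    push_cast at hi
    exact (hKer α i).trans (mul_exp_le_of_le_mul_exp_neg hε.le hR.le (by linarith) hα)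
  have hne {i j : Fin (3 * g - 2)} (hij : i ≠ j) : T^[i] α ≠ T^[j] α :=
    hdistinct i j i.isLt.le j.isLt.le (Fin.val_ne_of_ne hij)
  exact hmax ⟨fun i => T^[i] α, fun i j h => by_contra fun hij => hne hij h,
    fun i j hij => hshortdisj _ _ (hshort i) (hshort j) (hne hij)⟩

/-- Abstract form of Veech's short-curve bound: if `γ` (acting on curves by `T`) satisfies
Kerckhoff's inequality `Ext(T^j α) ≤ e^{2jR}·Ext α`, curves of extremal length `≤ ε₀''` are
pairwise disjoint, the iterates `T^i α` (for `i ≤ 3g−2`) are pairwise distinct, and there is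
no family of `3g−2` pairwise disjoint distinct curves, then no curve `α` can satisfy
`Ext α ≤ ε₀''·e^{−(6g−4)R}`.  (Hence every point on a closed geodesic of length at most `R`
has shortest-curve length at least `ε₀'·e^{−(6g−6)R}`.) -/
theorem stmt6 (g : ℕ) (hg : 2 ≤ g) (R : ℝ) (hR : 0 < R)
    (ε : ℝ) (hε : 0 < ε)
    (Curve : Type*) (Ext : Curve → ℝ) (T : Curve → Curve)
    (disj : Curve → Curve → Prop)
    (hKer : ∀ (α : Curve) (j : ℕ), Ext (T^[j] α) ≤ Real.exp (2 * j * R) * Ext α)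
    (hshortdisj : ∀ α β : Curve, Ext α ≤ ε → Ext β ≤ ε → α ≠ β → disj α β)
    (α : Curve)
    (hdistinct : ∀ i j : ℕ, i ≤ 3 * g - 2 → j ≤ 3 * g - 2 → i ≠ j → T^[i] α ≠ T^[j] α)
    (hmax : ¬ ∃ f : Fin (3 * g - 2) → Curve,
      Function.Injective f ∧ ∀ i j : Fin (3 * g - 2), i ≠ j → disj (f i) (f j))
    (hα : Ext α ≤ ε * Real.exp (-((6 * g : ℝ) - 4) * R)) :
    False :=
  stmt6_general g R hR ε hε Curve Ext T disj hKer hshortdisj α hdistinct hmax hα
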